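/- arXiv:2208.09622 — 4 statements merged into one kernel-verified Lean document; each statement's English description precedes it below -/
import Mathlib

section
/- Let G be a group, Δ ⊆ G a submonoid, Γ ⊆ Δ a subgroup, M a two-sided G-module, and let Δ̃ = Δ × M, Γ̃ = Γ × M with the twisted product (A,a)(B,b) = (AB, Ab + aB). For (A,a), (A,b) ∈ Δ̃, one has Γ̃(A,a)Γ̃ = Γ̃(A,b)Γ̃ if and only if there exists X ∈ Γ ∩ AΓA^{-1} such that X a A^{-1} X^{-1} A ≡ b modulo the subgroup A·M + M·A of M. -/
/-! STATEMENT 2: characterization of equality of double cosets `Γ̃(A,a)Γ̃ = Γ̃(A,b)Γ̃`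
in the twisted monoid `Δ̃ = Δ × M` (with `Γ̃ = Γ × M`). -/

/-- The twisted product `(A,a)(B,b) = (AB, A·b + a·B)` on `G × M`. -/
def tmul {G M : Type*} [Group G] [AddCommGroup M] (l r : G → M →+ M)
    (x y : G × M) : G × M :=
  (x.1 * y.1, l x.1 y.2 + r y.1 x.2)

/-- The double coset `Γ̃ x Γ̃` in the twisted monoid, where `Γ̃ = Γ × M`. -/
def tdcoset {G M : Type*} [Group G] [AddCommGroup M] (l r : G → M →+ M)
    (Γ : Set G) (x : G × M) : Set (G × M) :=
  {z | ∃ g h : G × M, g.1 ∈ Γ ∧ h.1 ∈ Γ ∧ z = tmul l r (tmul l r g x) h}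

section Aux

variable {G M : Type*} [Group G] [AddCommGroup M] (l r : G → M →+ M)

/-- Inverse for the twisted product. -/
def tinv (g : G × M) : G × M := (g.1⁻¹, -(l g.1⁻¹ (r g.1⁻¹ g.2)))

variable (hl1 : l 1 = AddMonoidHom.id M)
    (hlm : ∀ g h : G, l (g * h) = (l g).comp (l h))
    (hr1 : r 1 = AddMonoidHom.id M)
    (hrm : ∀ g h : G, r (g * h) = (r h).comp (r g))
    (hcomm : ∀ (g h : G) (m : M), l g (r h m) = r h (l g m))

include hlm hrm hcomm in
lemma tmul_assoc (x y z : G × M) :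
    tmul l r (tmul l r x y) z = tmul l r x (tmul l r y z) := by
  refine Prod.ext (mul_assoc _ _ _) ?_
  simp only [tmul, hlm, hrm, AddMonoidHom.comp_apply, map_add]
  rw [hcomm]
  abel

include hl1 in
lemma one_tmul (x : G × M) : tmul l r (1, 0) x = x := by
  simp [tmul, hl1]

include hr1 in
lemma tmul_one (x : G × M) : tmul l r x (1, 0) = x := by
  simp [tmul, hr1]

include hl1 hlm in
lemma lcan (g : G) (v : M) : l g (l g⁻¹ v) = v := by
  rw [← AddMonoidHom.comp_apply, ← hlm, mul_inv_cancel, hl1]; rfl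

include hl1 hlm in
lemma lcan' (g : G) (v : M) : l g⁻¹ (l g v) = v := by
  have h := lcan l hl1 hlm g⁻¹ v
  rwa [inv_inv] at h

include hr1 hrm in
lemma rcan (g : G) (v : M) : r g (r g⁻¹ v) = v := by
  rw [← AddMonoidHom.comp_apply, ← hrm, inv_mul_cancel, hr1]; rfl

include hr1 hrm in
lemma rcan' (g : G) (v : M) : r g⁻¹ (r g v) = v := by
  have h := rcan r hr1 hrm g⁻¹ v
  rwa [inv_inv] at h

include hl1 hlm in
lemma tmul_tinv (g : G × M) : tmul l r g (tinv l r g) = (1, 0) := by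
  refine Prod.ext (mul_inv_cancel _) ?_
  simp only [tmul, tinv, map_neg]
  rw [lcan l hl1 hlm]
  abel

include hr1 hrm hcomm in
lemma tinv_tmul (g : G × M) : tmul l r (tinv l r g) g = (1, 0) := by
  refine Prod.ext (inv_mul_cancel _) ?_
  simp only [tmul, tinv, map_neg]
  rw [← hcomm, rcan r hr1 hrm]
  abel

variable (Γ : Subgroup G)

include hl1 hr1 in
lemma mem_tdcoset_self (x : G × M) : x ∈ tdcoset l r (Γ : Set G) x := by
  exact ⟨(1, 0), (1, 0), Γ.one_mem, Γ.one_mem, by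
    rw [one_tmul l r hl1, tmul_one l r hr1]⟩

include hlm hrm hcomm in
lemma tdcoset_trans {x y z : G × M} (hz : z ∈ tdcoset l r (Γ : Set G) y)
    (hy : y ∈ tdcoset l r (Γ : Set G) x) : z ∈ tdcoset l r (Γ : Set G) x := by
  obtain ⟨g, h, hg, hh, rfl⟩ := hz
  obtain ⟨g', h', hg', hh', rfl⟩ := hy
  refine ⟨tmul l r g g', tmul l r h' h, Γ.mul_mem hg hg', Γ.mul_mem hh' hh, ?_⟩
  simp only [tmul_assoc l r hlm hrm hcomm]

include hl1 hlm hr1 hrm hcomm in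
lemma tdcoset_symm {x y : G × M} (hy : y ∈ tdcoset l r (Γ : Set G) x) :
    x ∈ tdcoset l r (Γ : Set G) y := by
  obtain ⟨g, h, hg, hh, rfl⟩ := hy
  refine ⟨tinv l r g, tinv l r h, inv_mem hg, inv_mem hh, ?_⟩
  rw [← tmul_assoc l r hlm hrm hcomm, ← tmul_assoc l r hlm hrm hcomm,
    tinv_tmul l r hr1 hrm hcomm, one_tmul l r hl1,
    tmul_assoc l r hlm hrm hcomm, tmul_tinv l r hl1 hlm, tmul_one l r hr1]

include hl1 hlm hr1 hrm hcomm in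
lemma tdcoset_eq_of_mem {x y : G × M} (hy : y ∈ tdcoset l r (Γ : Set G) x) :
    tdcoset l r (Γ : Set G) y = tdcoset l r (Γ : Set G) x := by
  ext z
  constructor
  · intro hz; exact tdcoset_trans l r hlm hrm hcomm Γ hz hy
  · intro hz
    exact tdcoset_trans l r hlm hrm hcomm Γ hz
      (tdcoset_symm l r hl1 hlm hr1 hrm hcomm Γ hy)

end Aux

theorem tdcoset_eq_iff {G M : Type*} [Group G] [AddCommGroup M]
    (l r : G → M →+ M)
    (hl1 : l 1 = AddMonoidHom.id M)
    (hlm : ∀ g h : G, l (g * h) = (l g).comp (l h))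
    (hr1 : r 1 = AddMonoidHom.id M)
    (hrm : ∀ g h : G, r (g * h) = (r h).comp (r g))
    (hcomm : ∀ (g h : G) (m : M), l g (r h m) = r h (l g m))
    (Γ : Subgroup G) (Δ : Submonoid G) (hΓΔ : (Γ : Set G) ⊆ (Δ : Set G))
    (A : G) (hA : A ∈ Δ) (a b : M) :
    tdcoset l r (Γ : Set G) (A, a) = tdcoset l r (Γ : Set G) (A, b) ↔
      ∃ X : G, X ∈ Γ ∧ A⁻¹ * X * A ∈ Γ ∧
        ∃ m m' : M, r (A⁻¹ * X⁻¹ * A) (l X a) = b + l A m + r A m' := by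
  constructor
  · intro heq
    have hmem : ((A, b) : G × M) ∈ tdcoset l r (Γ : Set G) (A, a) :=
      heq ▸ mem_tdcoset_self l r hl1 hr1 Γ (A, b)
    obtain ⟨⟨X, m⟩, ⟨Y, m'⟩, hg, hh, heq2⟩ := hmem
    simp only [tmul, Prod.mk.injEq] at heq2
    obtain ⟨h1, h2⟩ := heq2
    have hY : Y = A⁻¹ * X⁻¹ * A := by
      have e : Y = (X * A)⁻¹ * (X * A * Y) := by group
      rw [← h1] at e
      rw [e]; group
    subst hY
    refine ⟨X, hg, ?_, -(l (A⁻¹ * X * A) m'), -(r X⁻¹ m), ?_⟩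
    · have e : A⁻¹ * X * A = (A⁻¹ * X⁻¹ * A)⁻¹ := by group
      rw [e]; exact inv_mem hh
    · have e1 : l (X * A) m' = l A (l (A⁻¹ * X * A) m') := by
        rw [show X * A = A * (A⁻¹ * X * A) from by group, hlm,
          AddMonoidHom.comp_apply]
      have e2 : r (A⁻¹ * X⁻¹ * A) (r A m) = r A (r X⁻¹ m) := by
        rw [← AddMonoidHom.comp_apply, ← hrm,
          show A * (A⁻¹ * X⁻¹ * A) = X⁻¹ * A from by group, hrm,
          AddMonoidHom.comp_apply]
      rw [h2]
      simp only [map_add, map_neg, e1, e2]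
      abel
  · rintro ⟨X, hX, hXA, m, m', hmm⟩
    refine (tdcoset_eq_of_mem l r hl1 hlm hr1 hrm hcomm Γ ?_).symm
    refine ⟨(X, r X (-m')), (A⁻¹ * X⁻¹ * A, l (A⁻¹ * X⁻¹ * A) (-m)), hX, ?_, ?_⟩
    · have e : A⁻¹ * X⁻¹ * A = (A⁻¹ * X * A)⁻¹ := by group
      rw [e]; exact inv_mem hXA
    · refine Prod.ext (by show A = X * A * (A⁻¹ * X⁻¹ * A); group) ?_
      show b = l (X * A) (l (A⁻¹ * X⁻¹ * A) (-m))
        + r (A⁻¹ * X⁻¹ * A) (l X a + r A (r X (-m')))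
      have e1 : l (X * A) (l (A⁻¹ * X⁻¹ * A) (-m)) = l A (-m) := by
        rw [← AddMonoidHom.comp_apply, ← hlm,
          show X * A * (A⁻¹ * X⁻¹ * A) = A from by group]
      have e2 : r (A⁻¹ * X⁻¹ * A) (r A (r X (-m'))) = r A (-m') := by
        rw [← AddMonoidHom.comp_apply, ← hrm, ← AddMonoidHom.comp_apply, ← hrm,
          show X * (A * (A⁻¹ * X⁻¹ * A)) = A from by group]
      rw [map_add, e1, e2, hmm, map_neg, map_neg]
      abel
end

section
/- Let A = diag(1,1,p,p) ∈ GSp₄(ℚ_p) and Γ^A = GSp₄(ℤ_p) ∩ A GSp₄(ℤ_p) A^{-1}. Then Γ^A·e₃ = ℤ_p⁴ \ Aℤ_p⁴ and Γ^A·e₁ = Aℤ_p⁴ \ pℤ_p⁴; in particular ℤ_p⁴ = Γ^A e₃ ⊔ Γ^A e₁ ⊔ pℤ_p⁴ (disjoint union). -/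
/-! STATEMENT 15: for `A = diag(1,1,p,p)` and `Γ^A = GSp₄(ℤ_p) ∩ A GSp₄(ℤ_p) A⁻¹`,
one has `Γ^A·e₃ = ℤ_p⁴ \ Aℤ_p⁴`, `Γ^A·e₁ = Aℤ_p⁴ \ pℤ_p⁴`, and
`ℤ_p⁴ = Γ^A e₃ ⊔ Γ^A e₁ ⊔ pℤ_p⁴` (disjoint union). -/

open Matrix

/-- Coordinates of `ℚ_p⁴`, the `i`-th coordinate pairing with the `(2+i)`-th. -/
abbrev Idx := Fin 2 ⊕ Fin 2

/-- The standard symplectic form on `ℚ_p⁴`. -/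
noncomputable def Jmat (p : ℕ) [Fact p.Prime] : Matrix Idx Idx ℚ_[p] :=
  Matrix.fromBlocks 0 1 (-1) 0

/-- `GSp₄(ℚ_p)`: symplectic similitude matrices. -/
def GSpQ (p : ℕ) [Fact p.Prime] : Set (Matrix Idx Idx ℚ_[p]) :=
  {A | ∃ μ : ℚ_[p], μ ≠ 0 ∧ Aᵀ * Jmat p * A = μ • Jmat p}

/-- `GSp₄(ℤ_p) = GSp₄(ℚ_p) ∩ GL₄(ℤ_p)`. -/
def GSpZ (p : ℕ) [Fact p.Prime] : Set (Matrix Idx Idx ℚ_[p]) :=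
  {A | A ∈ GSpQ p ∧ (∀ i j, ‖A i j‖ ≤ 1) ∧ ‖A.det‖ = 1}

/-- `ℤ_p⁴` inside `ℚ_p⁴`. -/
def Zp4 (p : ℕ) [Fact p.Prime] : Set (Idx → ℚ_[p]) :=
  {v | ∀ i, ‖v i‖ ≤ 1}

/-- `A = diag(1,1,p,p)`. -/
noncomputable def Amat (p : ℕ) [Fact p.Prime] : Matrix Idx Idx ℚ_[p] :=
  Matrix.diagonal (Sum.elim ![1, 1] ![(p : ℚ_[p]), (p : ℚ_[p])])

/-- `Γ^A = GSp₄(ℤ_p) ∩ A GSp₄(ℤ_p) A⁻¹`. -/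
noncomputable def GammaA (p : ℕ) [Fact p.Prime] : Set (Matrix Idx Idx ℚ_[p]) :=
  {X | X ∈ GSpZ p ∧ (Amat p)⁻¹ * X * Amat p ∈ GSpZ p}

/-- `e₁ = (1,0,0,0)ᵗ`. -/
noncomputable def e1 (p : ℕ) [Fact p.Prime] : Idx → ℚ_[p] :=
  fun i => if i = Sum.inl 0 then 1 else 0

/-- `e₃ = (0,0,1,0)ᵗ`. -/
noncomputable def e3 (p : ℕ) [Fact p.Prime] : Idx → ℚ_[p] :=
  fun i => if i = Sum.inr 0 then 1 else 0

/-! The orbit of a vector under `Γ^A` is governed by two invariants: `Γ^A` preserves `Aℤ_p⁴`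
(its lower left block vanishes mod `p`) and, being contained in `GL₄(ℤ_p)`, sends no column
into `pℤ_p⁴`. The columns `X e₃` of `X ∈ Γ^A` therefore avoid `Aℤ_p⁴` (otherwise the third
column of `A⁻¹XA ∈ GL₄(ℤ_p)` would vanish mod `p`), and the columns `X e₁` lie in
`Aℤ_p⁴ \ pℤ_p⁴`. Conversely, a vector with a unit coordinate in the relevant half is, after
permuting the two coordinate pairs simultaneously, `X e₃` resp. `X e₁` for an explicit
block-triangular symplectic `X ∈ Γ^A`. -/

section Padic

variable {p : ℕ} [Fact p.Prime]

theorem Padic.natCast_p_ne_zero : (p : ℚ_[p]) ≠ 0 :=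
  Nat.cast_ne_zero.mpr (Fact.out : p.Prime).ne_zero

theorem Padic.norm_le_norm_p_iff_norm_lt_one (x : ℚ_[p]) : ‖x‖ ≤ ‖(p : ℚ_[p])‖ ↔ ‖x‖ < 1 := by
  simpa [Padic.norm_p] using Padic.norm_le_pow_iff_norm_lt_pow_add_one x (-1)

theorem Padic.norm_eq_one_of_not_le_norm_p {x : ℚ_[p]} (h1 : ‖x‖ ≤ 1)
    (hp : ¬‖x‖ ≤ ‖(p : ℚ_[p])‖) : ‖x‖ = 1 :=
  h1.antisymm (not_lt.mp fun h => hp ((Padic.norm_le_norm_p_iff_norm_lt_one x).mpr h))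

theorem Padic.exists_norm_eq_one_of_not_forall_le_norm_p {ι : Type*} {x : ι → ℚ_[p]}
    (h1 : ∀ i, ‖x i‖ ≤ 1) (hp : ¬∀ i, ‖x i‖ ≤ ‖(p : ℚ_[p])‖) : ∃ i, ‖x i‖ = 1 := by
  push Not at hp
  obtain ⟨i, hi⟩ := hp
  exact ⟨i, Padic.norm_eq_one_of_not_le_norm_p (h1 i) hi.not_ge⟩

theorem Padic.norm_det_le_one {n : Type*} [Fintype n] [DecidableEq n] (M : Matrix n n ℚ_[p])
    (hM : ∀ i j, ‖M i j‖ ≤ 1) : ‖M.det‖ ≤ 1 := by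
  let M' : Matrix n n ℤ_[p] := fun i j => ⟨M i j, hM i j⟩
  have : M = (PadicInt.Coe.ringHom (p := p)).mapMatrix M' := rfl
  rw [this, ← RingHom.map_det]
  exact PadicInt.norm_le_one _

theorem Padic.norm_det_le_of_norm_col_le {n : Type*} [Fintype n] [DecidableEq n]
    (M : Matrix n n ℚ_[p]) (hM : ∀ i j, ‖M i j‖ ≤ 1) {c : ℚ_[p]} (hc : c ≠ 0) (j : n)
    (hj : ∀ i, ‖M i j‖ ≤ ‖c‖) : ‖M.det‖ ≤ ‖c‖ := by
  have hM' : M = M.updateCol j (c • fun i => c⁻¹ * M i j) := by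
    ext i k
    rcases eq_or_ne k j with rfl | hk
    · simp [mul_inv_cancel_left₀ hc]
    · rw [updateCol_ne hk]
  rw [hM', det_updateCol_smul, norm_mul]
  refine mul_le_of_le_one_right (norm_nonneg c) (Padic.norm_det_le_one _ fun i k => ?_)
  rcases eq_or_ne k j with rfl | hk
  · rw [updateCol_self, norm_mul, norm_inv, inv_mul_le_one₀ (norm_pos_iff.mpr hc)]
    exact hj i
  · rw [updateCol_ne hk]
    exact hM i k

end Padic

namespace Set

variable {α : Type*} {a b c : Set α}

theorem eq_diff_union_diff_union_of_subset (hcb : c ⊆ b) (hba : b ⊆ a) :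
    a = a \ b ∪ b \ c ∪ c := by
  rw [union_assoc, sdiff_union_of_subset hcb, sdiff_union_of_subset hba]

theorem pairwise_disjoint_diff_diff_of_subset (hcb : c ⊆ b) :
    [a \ b, b \ c, c].Pairwise Disjoint := by
  simp only [List.pairwise_cons, List.mem_cons, List.not_mem_nil, forall_eq_or_imp, or_false,
    forall_eq, List.Pairwise.nil, and_true, IsEmpty.forall_iff, implies_true]
  exact ⟨⟨disjoint_sdiff_left.mono_right sdiff_subset, disjoint_sdiff_left.mono_right hcb⟩,
    disjoint_sdiff_left⟩

end Set

section GammaA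

variable {p : ℕ} [Fact p.Prime]

theorem mul_mem_GSpQ {X Y : Matrix Idx Idx ℚ_[p]} (hX : X ∈ GSpQ p) (hY : Y ∈ GSpQ p) :
    X * Y ∈ GSpQ p := by
  obtain ⟨μ, hμ, hX⟩ := hX
  obtain ⟨ν, hν, hY⟩ := hY
  refine ⟨μ * ν, mul_ne_zero hμ hν, ?_⟩
  calc (X * Y)ᵀ * Jmat p * (X * Y) = Yᵀ * (Xᵀ * Jmat p * X) * Y := by
        simp only [transpose_mul, Matrix.mul_assoc]
    _ = (μ * ν) • Jmat p := by
        rw [hX, Matrix.mul_smul, Matrix.smul_mul, hY, smul_smul]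

theorem diagonal_mem_GSpQ {α β : ℚ_[p]} (hα : α ≠ 0) (hβ : β ≠ 0) :
    diagonal (Sum.elim (fun _ => α) (fun _ => β)) ∈ GSpQ p := by
  refine ⟨α * β, mul_ne_zero hα hβ, ?_⟩
  ext (i | i) (j | j) <;> simp [Jmat, diagonal_transpose, one_apply, mul_comm]

theorem Jmat_submatrix_sumCongr (τ : Equiv.Perm (Fin 2)) :
    (Jmat p).submatrix (Equiv.sumCongr τ τ) (Equiv.sumCongr τ τ) = Jmat p := by
  ext (i | i) (j | j) <;> simp [Jmat, one_apply]

theorem submatrix_sumCongr_id_mem_GSpQ {X : Matrix Idx Idx ℚ_[p]} (hX : X ∈ GSpQ p)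
    (τ : Equiv.Perm (Fin 2)) : X.submatrix (Equiv.sumCongr τ τ) id ∈ GSpQ p := by
  obtain ⟨μ, hμ, hX⟩ := hX
  refine ⟨μ, hμ, ?_⟩
  rw [transpose_submatrix, ← Jmat_submatrix_sumCongr τ, submatrix_mul_equiv,
    submatrix_mul_equiv, submatrix_id_id, hX, Jmat_submatrix_sumCongr]

theorem not_forall_norm_le_norm_p_of_mem_GSpZ {X : Matrix Idx Idx ℚ_[p]} (hX : X ∈ GSpZ p)
    (j : Idx) : ¬∀ i, ‖X i j‖ ≤ ‖(p : ℚ_[p])‖ := fun hj => by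
  have := Padic.norm_det_le_of_norm_col_le X hX.2.1 Padic.natCast_p_ne_zero j hj
  rw [hX.2.2] at this
  exact this.not_gt Padic.norm_p_lt_one

theorem Amat_eq_diagonal : Amat p = diagonal (Sum.elim (fun _ => 1) (fun _ => (p : ℚ_[p]))) := by
  rw [Amat]
  congr 1
  funext i
  rcases i with i | i <;> fin_cases i <;> rfl

theorem inv_Amat : (Amat p)⁻¹ = diagonal (Sum.elim (fun _ => 1) (fun _ => (p : ℚ_[p])⁻¹)) := by
  refine inv_eq_right_inv ?_
  rw [Amat_eq_diagonal, diagonal_mul_diagonal, ← diagonal_one]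
  congr
  ext (i | i) <;> simp [(Fact.out : p.Prime).ne_zero]

theorem inv_Amat_mul_mul_Amat_apply (X : Matrix Idx Idx ℚ_[p]) (i j : Idx) :
    ((Amat p)⁻¹ * X * Amat p) i j =
      Sum.elim (fun _ => 1) (fun _ => (p : ℚ_[p])⁻¹) i * X i j *
        Sum.elim (fun _ => 1) (fun _ => (p : ℚ_[p])) j := by
  rw [inv_Amat, Amat_eq_diagonal, mul_diagonal, diagonal_mul]

theorem mem_GammaA_iff {X : Matrix Idx Idx ℚ_[p]} :
    X ∈ GammaA p ↔ X ∈ GSpZ p ∧ ∀ a b, ‖X (.inr a) (.inl b)‖ ≤ ‖(p : ℚ_[p])‖ := by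
  have hp : 0 < ‖(p : ℚ_[p])‖ := norm_pos_iff.mpr Padic.natCast_p_ne_zero
  constructor
  · rintro ⟨hX, -, hint, -⟩
    refine ⟨hX, fun a b => ?_⟩
    have := hint (.inr a) (.inl b)
    rwa [inv_Amat_mul_mul_Amat_apply, Sum.elim_inr, Sum.elim_inl, mul_one, norm_mul, norm_inv,
      inv_mul_le_one₀ hp] at this
  · rintro ⟨⟨hQ, hint, hdet⟩, hlow⟩
    have hA : IsUnit (Amat p) := by
      rw [Amat_eq_diagonal, isUnit_diagonal, Pi.isUnit_iff]
      rintro (i | i) <;> simp [(Fact.out : p.Prime).ne_zero]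
    refine ⟨⟨hQ, hint, hdet⟩, ?_, ?_, by rwa [det_conj' hA]⟩
    · rw [inv_Amat, Amat_eq_diagonal]
      exact mul_mem_GSpQ (mul_mem_GSpQ (diagonal_mem_GSpQ one_ne_zero
        (inv_ne_zero Padic.natCast_p_ne_zero)) hQ)
        (diagonal_mem_GSpQ one_ne_zero Padic.natCast_p_ne_zero)
    · rintro (i | i) (j | j) <;> simp only [inv_Amat_mul_mul_Amat_apply, Sum.elim_inl,
        Sum.elim_inr, norm_mul, norm_inv, one_mul, mul_one]
      · exact hint _ _
      · exact mul_le_one₀ (hint _ _) (norm_nonneg _) Padic.norm_p_lt_one.le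
      · rw [inv_mul_le_one₀ hp]; exact hlow i j
      · rw [mul_right_comm, inv_mul_cancel₀ hp.ne', one_mul]; exact hint _ _

theorem submatrix_sumCongr_id_mem_GammaA {X : Matrix Idx Idx ℚ_[p]} (hX : X ∈ GammaA p)
    (τ : Equiv.Perm (Fin 2)) : X.submatrix (Equiv.sumCongr τ τ) id ∈ GammaA p := by
  obtain ⟨⟨hQ, hint, hdet⟩, hlow⟩ := mem_GammaA_iff.mp hX
  refine mem_GammaA_iff.mpr ⟨⟨submatrix_sumCongr_id_mem_GSpQ hQ τ, fun i j => hint _ _, ?_⟩,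
    fun a b => hlow _ _⟩
  rw [det_permute, norm_mul, hdet, mul_one]
  rcases Int.units_eq_one_or (Equiv.Perm.sign (Equiv.sumCongr τ τ)) with h | h <;> simp [h]

end GammaA

section Lattices

variable {p : ℕ} [Fact p.Prime]

variable (p) in
def AZp4 : Set (Idx → ℚ_[p]) := {w | ∃ v ∈ Zp4 p, w = (Amat p).mulVec v}

variable (p) in
def pZp4 : Set (Idx → ℚ_[p]) := {w | ∃ v ∈ Zp4 p, w = (p : ℚ_[p]) • v}

theorem exists_mem_Zp4_eq_mul_iff {d : Idx → ℚ_[p]} (hd : ∀ i, d i ≠ 0) (w : Idx → ℚ_[p]) :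
    (∃ v ∈ Zp4 p, w = fun i => d i * v i) ↔ ∀ i, ‖w i‖ ≤ ‖d i‖ := by
  constructor
  · rintro ⟨v, hv, rfl⟩ i
    rw [norm_mul]
    exact mul_le_of_le_one_right (norm_nonneg _) (hv i)
  · refine fun hw => ⟨fun i => (d i)⁻¹ * w i, fun i => ?_, funext fun i => ?_⟩
    · rw [norm_mul, norm_inv, inv_mul_le_one₀ (norm_pos_iff.mpr (hd i))]
      exact hw i
    · rw [mul_inv_cancel_left₀ (hd i)]

theorem mem_AZp4_iff {w : Idx → ℚ_[p]} :
    w ∈ AZp4 p ↔ (∀ k, ‖w (.inl k)‖ ≤ 1) ∧ ∀ k, ‖w (.inr k)‖ ≤ ‖(p : ℚ_[p])‖ := by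
  have hA (v : Idx → ℚ_[p]) :
      Amat p *ᵥ v = fun i => Sum.elim (fun _ => 1) (fun _ => (p : ℚ_[p])) i * v i := by
    rw [Amat_eq_diagonal]
    exact funext (mulVec_diagonal _ v)
  change (∃ v ∈ Zp4 p, w = Amat p *ᵥ v) ↔ _
  simp only [hA]
  rw [exists_mem_Zp4_eq_mul_iff (by rintro (i | i) <;> simp [(Fact.out : p.Prime).ne_zero]),
    Sum.forall]
  simp

theorem mem_pZp4_iff {w : Idx → ℚ_[p]} : w ∈ pZp4 p ↔ ∀ i, ‖w i‖ ≤ ‖(p : ℚ_[p])‖ :=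
  exists_mem_Zp4_eq_mul_iff (d := fun _ => (p : ℚ_[p])) (fun _ => Padic.natCast_p_ne_zero) w

theorem pZp4_subset_AZp4 : pZp4 p ⊆ AZp4 p := fun w hw => by
  rw [mem_pZp4_iff] at hw
  exact mem_AZp4_iff.mpr ⟨fun k => (hw _).trans Padic.norm_p_lt_one.le, fun k => hw _⟩

theorem AZp4_subset_Zp4 : AZp4 p ⊆ Zp4 p := fun w hw => by
  obtain ⟨h1, h2⟩ := mem_AZp4_iff.mp hw
  rintro (k | k)
  exacts [h1 k, (h2 k).trans Padic.norm_p_lt_one.le]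

end Lattices

section Orbits

variable {p : ℕ} [Fact p.Prime]

variable (p) in
def orbitGammaA (v : Idx → ℚ_[p]) : Set (Idx → ℚ_[p]) :=
  {w | ∃ X ∈ GammaA p, w = X.mulVec v}

theorem comp_sumCongr_mem_orbitGammaA {v w : Idx → ℚ_[p]} (hw : w ∈ orbitGammaA p v)
    (τ : Equiv.Perm (Fin 2)) : w ∘ Equiv.sumCongr τ τ ∈ orbitGammaA p v := by
  obtain ⟨X, hX, rfl⟩ := hw
  refine ⟨X.submatrix (Equiv.sumCongr τ τ) id, submatrix_sumCongr_id_mem_GammaA hX τ, ?_⟩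
  ext i
  simp [mulVec, dotProduct]

theorem mem_orbitGammaA_of_comp_sumCongr {v w : Idx → ℚ_[p]} (τ : Equiv.Perm (Fin 2))
    (hw : w ∘ Equiv.sumCongr τ τ ∈ orbitGammaA p v) : w ∈ orbitGammaA p v := by
  convert comp_sumCongr_mem_orbitGammaA hw τ.symm
  ext (i | i) <;> simp

theorem e1_eq_single : e1 p = Pi.single (.inl 0) 1 := by
  ext i
  simp [e1, Pi.single_apply]

theorem e3_eq_single : e3 p = Pi.single (.inr 0) 1 := by
  ext i
  simp [e3, Pi.single_apply]

theorem orbitGammaA_e3_subset : orbitGammaA p (e3 p) ⊆ Zp4 p \ AZp4 p := by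
  rintro _ ⟨X, ⟨hX, hY⟩, rfl⟩
  rw [e3_eq_single, mulVec_single_one]
  refine ⟨fun i => hX.2.1 i _, fun hAZ => not_forall_norm_le_norm_p_of_mem_GSpZ hY (.inr 0) ?_⟩
  rintro (a | a) <;> simp only [inv_Amat_mul_mul_Amat_apply, Sum.elim_inl, Sum.elim_inr]
  · rw [one_mul, norm_mul]
    exact mul_le_of_le_one_left (norm_nonneg _) (hX.2.1 _ _)
  · rw [mul_right_comm, inv_mul_cancel₀ Padic.natCast_p_ne_zero, one_mul]
    exact (mem_AZp4_iff.mp hAZ).2 a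

theorem orbitGammaA_e1_subset : orbitGammaA p (e1 p) ⊆ AZp4 p \ pZp4 p := by
  rintro _ ⟨X, hX, rfl⟩
  obtain ⟨hX, hlow⟩ := mem_GammaA_iff.mp hX
  rw [e1_eq_single, mulVec_single_one]
  exact ⟨mem_AZp4_iff.mpr ⟨fun k => hX.2.1 _ _, fun k => hlow k 0⟩,
    fun hpZ => not_forall_norm_le_norm_p_of_mem_GSpZ hX (.inl 0) (mem_pZp4_iff.mp hpZ)⟩

theorem exists_mem_GammaA_mulVec_e3 {v : Idx → ℚ_[p]} (hv : v ∈ Zp4 p)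
    (hunit : ‖v (.inr 0)‖ = 1) : ∃ X ∈ GammaA p, X *ᵥ e3 p = v := by
  -- `[[A, B], [0, D]]` with `AᵀD = 1` and `BᵀD` symmetric is symplectic; its third column is `v`.
  set u := (v (.inr 0))⁻¹
  have hu : u * v (.inr 0) = 1 := inv_mul_cancel₀ (norm_ne_zero_iff.mp (by simp [hunit]))
  have hun : ‖u‖ ≤ 1 := by simp [u, hunit]
  refine ⟨fromBlocks !![u, -v (.inr 1) * u; 0, 1] !![v (.inl 0), v (.inl 1) * u; v (.inl 1), 0]
    0 !![v (.inr 0), 0; v (.inr 1), 1], mem_GammaA_iff.mpr ⟨⟨⟨1, one_ne_zero, ?_⟩, ?_, ?_⟩, ?_⟩, ?_⟩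
  · ext (i | i) (j | j) <;> fin_cases i <;> fin_cases j <;>
      simp [Jmat, mul_apply, Fintype.sum_sum_type, one_apply] <;> grind
  · rintro (i | i) (j | j) <;> fin_cases i <;> fin_cases j <;> simp <;>
      first | exact hv _ | exact hun | exact mul_le_one₀ (hv _) (norm_nonneg _) hun
  · rw [det_fromBlocks_zero₂₁, det_fin_two_of, det_fin_two_of]
    refine (congrArg norm (?_ : _ = (1 : ℚ_[p]))).trans norm_one
    linear_combination hu
  · simp
  · ext (i | i) <;> fin_cases i <;> simp [e3_eq_single]

theorem exists_mem_GammaA_mulVec_e1 {v : Idx → ℚ_[p]} (hv : v ∈ AZp4 p)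
    (hunit : ‖v (.inl 0)‖ = 1) : ∃ X ∈ GammaA p, X *ᵥ e1 p = v := by
  -- `[[A, 0], [C, D]]` with `AᵀD = 1` and `AᵀC` symmetric; `C ≡ 0 mod p` as `v ∈ Aℤ_p⁴`.
  set u := (v (.inl 0))⁻¹
  have hu : u * v (.inl 0) = 1 := inv_mul_cancel₀ (norm_ne_zero_iff.mp (by simp [hunit]))
  have hun : ‖u‖ ≤ 1 := by simp [u, hunit]
  have hint := AZp4_subset_Zp4 hv
  have hlow := (mem_AZp4_iff.mp hv).2
  refine ⟨fromBlocks !![v (.inl 0), 0; v (.inl 1), 1] 0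
    !![v (.inr 0), v (.inr 1) * u; v (.inr 1), 0] !![u, -v (.inl 1) * u; 0, 1],
    mem_GammaA_iff.mpr ⟨⟨⟨1, one_ne_zero, ?_⟩, ?_, ?_⟩, ?_⟩, ?_⟩
  · ext (i | i) (j | j) <;> fin_cases i <;> fin_cases j <;>
      simp [Jmat, mul_apply, Fintype.sum_sum_type, one_apply] <;> grind
  · rintro (i | i) (j | j) <;> fin_cases i <;> fin_cases j <;> simp <;>
      first | exact hint _ | exact hun | exact mul_le_one₀ (hint _) (norm_nonneg _) hun
  · rw [det_fromBlocks_zero₁₂, det_fin_two_of, det_fin_two_of]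
    refine (congrArg norm (?_ : _ = (1 : ℚ_[p]))).trans norm_one
    linear_combination hu
  · intro a b
    fin_cases a <;> fin_cases b <;> simp [-Padic.norm_p] <;>
      first | exact hlow _ | exact mul_le_of_le_one_right (norm_nonneg _) hun |>.trans (hlow _)
  · ext (i | i) <;> fin_cases i <;> simp [e1_eq_single]

theorem orbitGammaA_e3 : orbitGammaA p (e3 p) = Zp4 p \ AZp4 p := by
  refine orbitGammaA_e3_subset.antisymm fun v ⟨hv, hvA⟩ => ?_
  obtain ⟨k, hk⟩ := Padic.exists_norm_eq_one_of_not_forall_le_norm_p (fun k => hv (.inr k))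
    fun h => hvA (mem_AZp4_iff.mpr ⟨fun k => hv _, h⟩)
  refine mem_orbitGammaA_of_comp_sumCongr (Equiv.swap 0 k) ?_
  obtain ⟨X, hX, hXv⟩ := exists_mem_GammaA_mulVec_e3
    (v := v ∘ Equiv.sumCongr (Equiv.swap 0 k) (Equiv.swap 0 k)) (fun i => hv _)
    (by simpa using hk)
  exact ⟨X, hX, hXv.symm⟩

theorem orbitGammaA_e1 : orbitGammaA p (e1 p) = AZp4 p \ pZp4 p := by
  refine orbitGammaA_e1_subset.antisymm fun v ⟨hv, hvp⟩ => ?_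
  obtain ⟨hinl, hinr⟩ := mem_AZp4_iff.mp hv
  obtain ⟨k, hk⟩ := Padic.exists_norm_eq_one_of_not_forall_le_norm_p hinl
    fun h => hvp (mem_pZp4_iff.mpr (Sum.forall.mpr ⟨h, hinr⟩))
  refine mem_orbitGammaA_of_comp_sumCongr (Equiv.swap 0 k) ?_
  obtain ⟨X, hX, hXv⟩ := exists_mem_GammaA_mulVec_e1
    (v := v ∘ Equiv.sumCongr (Equiv.swap 0 k) (Equiv.swap 0 k))
    (mem_AZp4_iff.mpr ⟨fun i => hinl _, fun i => hinr _⟩) (by simpa using hk)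
  exact ⟨X, hX, hXv.symm⟩

end Orbits

theorem orbit_decomposition_GammaA (p : ℕ) [Fact p.Prime] :
    let orbit : (Idx → ℚ_[p]) → Set (Idx → ℚ_[p]) :=
      fun v => {w | ∃ X ∈ GammaA p, w = X.mulVec v}
    let AZ : Set (Idx → ℚ_[p]) := {w | ∃ v ∈ Zp4 p, w = (Amat p).mulVec v}
    let pZ : Set (Idx → ℚ_[p]) := {w | ∃ v ∈ Zp4 p, w = (p : ℚ_[p]) • v}
    orbit (e3 p) = Zp4 p \ AZ ∧
    orbit (e1 p) = AZ \ pZ ∧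
    Zp4 p = orbit (e3 p) ∪ orbit (e1 p) ∪ pZ ∧
    ([orbit (e3 p), orbit (e1 p), pZ] : List (Set (Idx → ℚ_[p]))).Pairwise Disjoint := by
  intro orbit AZ pZ
  have h3 : orbit (e3 p) = Zp4 p \ AZ := orbitGammaA_e3
  have h1 : orbit (e1 p) = AZ \ pZ := orbitGammaA_e1
  rw [h3, h1]
  exact ⟨rfl, rfl, Set.eq_diff_union_diff_union_of_subset pZp4_subset_AZp4 AZp4_subset_Zp4,
    Set.pairwise_disjoint_diff_diff_of_subset pZp4_subset_AZp4⟩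
end

section
/- Let M ∈ GSp₄(ℚ_p) ∩ M₄(ℤ_p) with v_p(μ(M)) = 2, where μ is the similitude multiplier. Then M lies in the double coset GSp₄(ℤ_p)·diag(1,p,p²,p)·GSp₄(ℤ_p) if and only if the reduction of M modulo p has rank 1 over 𝔽_p. -/
/-! STATEMENT 16: for `M ∈ GSp₄(ℚ_p) ∩ M₄(ℤ_p)` with `v_p(μ(M)) = 2`,
`M ∈ GSp₄(ℤ_p)·diag(1,p,p²,p)·GSp₄(ℤ_p)` iff the reduction of `M` mod `p` has
rank `1` over `𝔽_p`. -/

open Matrix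

/-- `B = diag(1,p,p²,p)`. -/
noncomputable def Bmat (p : ℕ) [Fact p.Prime] : Matrix Idx Idx ℚ_[p] :=
  Matrix.diagonal (Sum.elim ![1, (p : ℚ_[p])] ![(p : ℚ_[p]) ^ 2, (p : ℚ_[p])])

/-! Reduction mod `p` sends `GSp₄(ℤ_p)` to invertible matrices, so `rk_p` is constant on the
double coset of `B`, where it equals `rk_p(B) = 1`. Conversely, if `rk_p(M) = 1` some entry of
`M` is a unit, and integral symplectic row operations turn the column through it into `e₁`. The
relation `Nᵀ J N = μ J` then makes the row of `N` paired with the first one `μ` times a row of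
`J`, so it is divisible by `p²`, and rank one makes the two remaining rows divisible by `p`.
Hence `C = B⁻¹ N` is integral, and as a similitude with unit multiplier `μ / p²` it lies in
`GSp₄(ℤ_p)`. -/

namespace Matrix

theorem two_le_rank_of_ne_zero {K m n : Type*} [Field K] [Fintype n] (A : Matrix m n K)
    {i₀ i₁ : m} {j₀ j₁ : n} (h₀₀ : A i₀ j₀ ≠ 0) (h₁₀ : A i₁ j₀ = 0)
    (h₁₁ : A i₁ j₁ ≠ 0) : 2 ≤ A.rank := by
  have hminor : IsUnit (A.submatrix ![i₀, i₁] ![j₀, j₁]).det := by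
    rw [det_fin_two]
    simpa [h₁₀] using mul_ne_zero h₀₀ h₁₁
  have h := A.rank_submatrix_le ![i₀, i₁] ![j₀, j₁]
  rwa [rank_of_isUnit _ ((isUnit_iff_isUnit_det _).mpr hminor), Fintype.card_fin] at h

variable {R n : Type*} [Fintype n]

def IsSimilitude [CommRing R] (J A : Matrix n n R) (ν : R) : Prop :=
  Aᵀ * J * A = ν • J

namespace IsSimilitude

variable {J A B : Matrix n n R} {a b : R}

theorem mul [CommRing R] (hA : IsSimilitude J A a) (hB : IsSimilitude J B b) :
    IsSimilitude J (A * B) (a * b) := by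
  unfold IsSimilitude at *
  calc (A * B)ᵀ * J * (A * B) = Bᵀ * (Aᵀ * J * A) * B := by
        simp only [transpose_mul, Matrix.mul_assoc]
    _ = (a * b) • J := by rw [hA, Matrix.mul_smul, Matrix.smul_mul, hB, smul_smul]

theorem inv [Field R] [DecidableEq n] (hA : IsSimilitude J A a) (ha : a ≠ 0)
    (hdet : IsUnit A.det) : IsSimilitude J A⁻¹ a⁻¹ := by
  unfold IsSimilitude at *
  calc (A⁻¹)ᵀ * J * A⁻¹ = a⁻¹ • ((A⁻¹)ᵀ * (a • J) * A⁻¹) := by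
        rw [Matrix.mul_smul, Matrix.smul_mul, smul_smul, inv_mul_cancel₀ ha, one_smul]
    _ = a⁻¹ • ((A * A⁻¹)ᵀ * J * (A * A⁻¹)) := by
        rw [← hA]; simp only [transpose_mul, Matrix.mul_assoc]
    _ = a⁻¹ • J := by simp [mul_nonsing_inv _ hdet]

theorem det_sq [CommRing R] [IsDomain R] [DecidableEq n] (hA : IsSimilitude J A a)
    (hJ : J.det ≠ 0) : A.det ^ 2 = a ^ Fintype.card n := by
  have h := congrArg det hA
  rw [det_mul, det_mul, det_transpose, det_smul] at h
  exact mul_right_cancel₀ hJ (by linear_combination h)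

theorem of_mul_left [Field R] (hA : IsSimilitude J A a) (hAB : IsSimilitude J (A * B) b)
    (ha : a ≠ 0) : IsSimilitude J B (b / a) := by
  unfold IsSimilitude at *
  have h : a • (Bᵀ * J * B) = b • J := by
    rw [← hAB, ← Matrix.smul_mul, ← Matrix.mul_smul, ← hA]
    simp only [transpose_mul, Matrix.mul_assoc]
  rw [div_eq_inv_mul, ← smul_smul, ← h, smul_smul, inv_mul_cancel₀ ha, one_smul]

end IsSimilitude

end Matrix

theorem PadicInt.toZMod_eq_zero_iff {p : ℕ} [Fact p.Prime] (x : ℤ_[p]) :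
    toZMod x = 0 ↔ ‖x‖ < 1 := by
  rw [← RingHom.mem_ker, ker_toZMod, IsLocalRing.mem_maximalIdeal, mem_nonunits]

theorem Padic.norm_div_p_le_one_of_norm_lt_one {p : ℕ} [Fact p.Prime] {x : ℚ_[p]}
    (hx : ‖x‖ < 1) : ‖x / p‖ ≤ 1 := by
  have h := (Padic.norm_le_pow_iff_norm_lt_pow_add_one x (-1)).mpr (by simpa using hx)
  rw [norm_div, Padic.norm_p, div_le_one (by simp [(Fact.out : p.Prime).pos])]
  simpa using h

theorem Padic.norm_div_p_sq_eq_one_of_valuation_eq_two {p : ℕ} [Fact p.Prime] {x : ℚ_[p]}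
    (hx : x.valuation = 2) : ‖x / (p : ℚ_[p]) ^ 2‖ = 1 := by
  have hx0 : x ≠ 0 := by rintro rfl; simp at hx
  rw [norm_div, norm_pow, Padic.norm_p, Padic.norm_eq_zpow_neg_valuation hx0, hx]
  have : (p : ℝ) ≠ 0 := by simp [(Fact.out : p.Prime).ne_zero]
  field_simp

namespace Matrix

variable {p : ℕ} [Fact p.Prime] {n : Type*}

def IsPadicInt (M : Matrix n n ℚ_[p]) : Prop := ∀ i j, ‖M i j‖ ≤ 1

theorem isPadicInt_map_coe (M' : Matrix n n ℤ_[p]) :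
    (M'.map PadicInt.Coe.ringHom).IsPadicInt :=
  fun i j => PadicInt.norm_le_one (M' i j)

theorem IsPadicInt.exists_map_eq {A : Matrix n n ℚ_[p]} (hA : A.IsPadicInt) :
    ∃ A' : Matrix n n ℤ_[p], A'.map PadicInt.Coe.ringHom = A :=
  ⟨of fun i j => ⟨A i j, hA i j⟩, rfl⟩

variable [Fintype n]

theorem IsPadicInt.mul {A B : Matrix n n ℚ_[p]} (hA : A.IsPadicInt) (hB : B.IsPadicInt) :
    (A * B).IsPadicInt := by
  obtain ⟨A', rfl⟩ := hA.exists_map_eq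
  obtain ⟨B', rfl⟩ := hB.exists_map_eq
  rw [← Matrix.map_mul]
  exact isPadicInt_map_coe _

/-- `rk_p(M) = r`, as a predicate since `rk_p` only makes sense for integral `M`. -/
def HasReductionRank (M : Matrix n n ℚ_[p]) (r : ℕ) : Prop :=
  ∃ M' : Matrix n n ℤ_[p], M'.map PadicInt.Coe.ringHom = M ∧
    (M'.map (PadicInt.toZMod : ℤ_[p] →+* ZMod p)).rank = r

theorem hasReductionRank_iff {M : Matrix n n ℚ_[p]} {r : ℕ} : M.HasReductionRank r ↔
    ∃ M' : Matrix n n ℤ_[p], (∀ i j, (M' i j : ℚ_[p]) = M i j) ∧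
      (M'.map (PadicInt.toZMod : ℤ_[p] →+* ZMod p)).rank = r :=
  exists_congr fun _ => and_congr_left' Matrix.ext_iff.symm

namespace HasReductionRank

variable {M : Matrix n n ℚ_[p]} {r : ℕ}

theorem isPadicInt (h : M.HasReductionRank r) : M.IsPadicInt := by
  obtain ⟨M', rfl, -⟩ := h
  exact isPadicInt_map_coe M'

theorem exists_norm_eq_one (h : M.HasReductionRank r) (hr : r ≠ 0) :
    ∃ i j, ‖M i j‖ = 1 := by
  obtain ⟨M', rfl, hrank⟩ := h
  by_contra! hlt
  have hzero : M'.map (PadicInt.toZMod : ℤ_[p] →+* ZMod p) = 0 := by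
    ext i j
    exact (PadicInt.toZMod_eq_zero_iff _).mpr
      (lt_of_le_of_ne (PadicInt.norm_le_one _) (hlt i j))
  rw [hzero, rank_zero] at hrank
  exact hr hrank.symm

theorem norm_lt_one_of_rank_one (h : M.HasReductionRank 1) {i₀ i j₀ : n}
    (h₀₀ : ‖M i₀ j₀‖ = 1) (h₁₀ : ‖M i j₀‖ < 1) (j : n) : ‖M i j‖ < 1 := by
  obtain ⟨M', rfl, hrank⟩ := h
  by_contra hij
  have h2 := two_le_rank_of_ne_zero (M'.map (PadicInt.toZMod : ℤ_[p] →+* ZMod p))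
    (i₀ := i₀) (j₁ := j)
    (by rw [map_apply, Ne, PadicInt.toZMod_eq_zero_iff]; exact not_lt.mpr h₀₀.ge)
    (by rw [map_apply, PadicInt.toZMod_eq_zero_iff]; exact h₁₀)
    (by rw [map_apply, Ne, PadicInt.toZMod_eq_zero_iff]; exact hij)
  omega

end HasReductionRank

variable [DecidableEq n]

theorem norm_det_map_coe (M' : Matrix n n ℤ_[p]) :
    ‖(M'.map PadicInt.Coe.ringHom).det‖ = ‖M'.det‖ := by
  rw [← RingHom.mapMatrix_apply, ← RingHom.map_det]
  rfl

namespace IsPadicInt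

variable {A : Matrix n n ℚ_[p]}

theorem exists_map_eq_isUnit_det (hA : A.IsPadicInt) (hdet : ‖A.det‖ = 1) :
    ∃ A' : Matrix n n ℤ_[p], A'.map PadicInt.Coe.ringHom = A ∧ IsUnit A'.det := by
  obtain ⟨A', rfl⟩ := hA.exists_map_eq
  exact ⟨A', rfl, PadicInt.isUnit_iff.mpr ((norm_det_map_coe A').symm.trans hdet)⟩

theorem inv (hA : A.IsPadicInt) (hdet : ‖A.det‖ = 1) : A⁻¹.IsPadicInt := by
  obtain ⟨A', rfl, hA'⟩ := hA.exists_map_eq_isUnit_det hdet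
  rw [inv_eq_left_inv (B := A'⁻¹.map PadicInt.Coe.ringHom)]
  · exact isPadicInt_map_coe _
  · rw [← Matrix.map_mul, nonsing_inv_mul _ hA', Matrix.map_one _ (map_zero _) (map_one _)]

end IsPadicInt

namespace HasReductionRank

variable {M X : Matrix n n ℚ_[p]} {r : ℕ}

theorem mul_left (h : M.HasReductionRank r) (hX : X.IsPadicInt) (hdet : ‖X.det‖ = 1) :
    (X * M).HasReductionRank r := by
  obtain ⟨M', rfl, hr⟩ := h
  obtain ⟨X', rfl, hX'⟩ := hX.exists_map_eq_isUnit_det hdet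
  refine ⟨X' * M', Matrix.map_mul, ?_⟩
  rw [Matrix.map_mul, rank_mul_eq_right_of_isUnit_det _ _ ?_, hr]
  rw [← RingHom.mapMatrix_apply, ← RingHom.map_det]
  exact hX'.map _

theorem mul_right (h : M.HasReductionRank r) (hX : X.IsPadicInt) (hdet : ‖X.det‖ = 1) :
    (M * X).HasReductionRank r := by
  obtain ⟨M', rfl, hr⟩ := h
  obtain ⟨X', rfl, hX'⟩ := hX.exists_map_eq_isUnit_det hdet
  refine ⟨M' * X', Matrix.map_mul, ?_⟩
  rw [Matrix.map_mul, rank_mul_eq_left_of_isUnit_det _ _ ?_, hr]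
  rw [← RingHom.mapMatrix_apply, ← RingHom.map_det]
  exact hX'.map _

end HasReductionRank

end Matrix

open Matrix

section GSp4

variable {p : ℕ} [Fact p.Prime]

theorem Jmat_eq_neg_J : Jmat p = -J (Fin 2) ℚ_[p] := by
  simp [Jmat, J, fromBlocks_neg]

theorem det_Jmat_ne_zero : (Jmat p).det ≠ 0 := by
  rw [Jmat_eq_neg_J, det_neg]
  exact mul_ne_zero (by simp) (isUnit_det_J (Fin 2) ℚ_[p]).ne_zero

theorem isPadicInt_Jmat : (Jmat p).IsPadicInt := by
  intro i j
  rcases i with i | i <;> rcases j with j | j <;> fin_cases i <;> fin_cases j <;> simp [Jmat]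

theorem norm_det_of_isSimilitude {A : Matrix Idx Idx ℚ_[p]} {ν : ℚ_[p]}
    (hA : IsSimilitude (Jmat p) A ν) : ‖A.det‖ = ‖ν‖ ^ 2 := by
  have h := congrArg norm (hA.det_sq det_Jmat_ne_zero)
  rw [norm_pow, norm_pow, show Fintype.card Idx = 2 * 2 from rfl, pow_mul] at h
  exact (pow_left_inj₀ (norm_nonneg _) (by positivity) two_ne_zero).mp h

theorem mem_GSpZ_of_isSimilitude {A : Matrix Idx Idx ℚ_[p]} {ν : ℚ_[p]} (hint : A.IsPadicInt)
    (hA : IsSimilitude (Jmat p) A ν) (hν : ‖ν‖ = 1) : A ∈ GSpZ p :=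
  ⟨⟨ν, norm_ne_zero_iff.mp (by simp [hν]), hA⟩, hint,
    by rw [norm_det_of_isSimilitude hA, hν, one_pow]⟩

theorem isUnit_det_of_mem_GSpZ {A : Matrix Idx Idx ℚ_[p]} (hA : A ∈ GSpZ p) : IsUnit A.det :=
  isUnit_iff_ne_zero.mpr (norm_ne_zero_iff.mp (by simp [hA.2.2]))

theorem mul_mem_GSpZ {A B : Matrix Idx Idx ℚ_[p]} (hA : A ∈ GSpZ p) (hB : B ∈ GSpZ p) :
    A * B ∈ GSpZ p := by
  obtain ⟨⟨a, ha, hAa⟩, hAint, hAdet⟩ := hA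
  obtain ⟨⟨b, hb, hBb⟩, hBint, hBdet⟩ := hB
  exact ⟨⟨a * b, mul_ne_zero ha hb, IsSimilitude.mul hAa hBb⟩, IsPadicInt.mul hAint hBint,
    by rw [det_mul, norm_mul, hAdet, hBdet, one_mul]⟩

theorem inv_mem_GSpZ {A : Matrix Idx Idx ℚ_[p]} (hA : A ∈ GSpZ p) : A⁻¹ ∈ GSpZ p := by
  obtain ⟨⟨a, ha, hAa⟩, hAint, hAdet⟩ := hA
  refine ⟨⟨a⁻¹, inv_ne_zero ha, IsSimilitude.inv hAa ha (isUnit_det_of_mem_GSpZ ?_)⟩,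
    IsPadicInt.inv hAint hAdet,
    by rw [det_nonsing_inv, Ring.inverse_eq_inv, norm_inv, hAdet, inv_one]⟩
  exact ⟨⟨a, ha, hAa⟩, hAint, hAdet⟩

theorem isSimilitude_Bmat : IsSimilitude (Jmat p) (Bmat p) ((p : ℚ_[p]) ^ 2) := by
  ext i j
  rcases i with i | i <;> rcases j with j | j <;> fin_cases i <;> fin_cases j <;>
    simp [Bmat, Jmat, Matrix.mul_apply, Fintype.sum_sum_type] <;> ring

theorem hasReductionRank_Bmat : (Bmat p).HasReductionRank 1 := by
  refine ⟨diagonal (Sum.elim ![1, (p : ℤ_[p])] ![(p : ℤ_[p]) ^ 2, (p : ℤ_[p])]), ?_, ?_⟩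
  · rw [diagonal_map (map_zero _), Bmat]
    congr 1
    ext i
    rcases i with i | i <;> fin_cases i <;> simp
  · rw [diagonal_map (map_zero _), rank_diagonal]
    refine Fintype.card_eq_one_iff.mpr ⟨⟨Sum.inl 0, by simp⟩, ?_⟩
    rintro ⟨i, hi⟩
    rcases i with i | i <;> fin_cases i <;> simp at hi ⊢

theorem exists_mem_GSpZ_row_eq_single (i₀ : Idx) :
    ∃ P ∈ GSpZ p, IsSimilitude (Jmat p) P 1 ∧ P (Sum.inl 0) = Pi.single i₀ 1 := by
  have hJ : IsSimilitude (Jmat p) (Jmat p) 1 := by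
    ext i j
    rcases i with i | i <;> rcases j with j | j <;> fin_cases i <;> fin_cases j <;>
      simp [Jmat, Matrix.mul_apply, Fintype.sum_sum_type]
  set σ : Matrix Idx Idx ℚ_[p] := fromBlocks !![0, 1; 1, 0] 0 0 !![0, 1; 1, 0]
  have hσ : IsSimilitude (Jmat p) σ 1 := by
    ext i j
    rcases i with i | i <;> rcases j with j | j <;> fin_cases i <;> fin_cases j <;>
      simp [σ, Jmat, Matrix.mul_apply, Fintype.sum_sum_type]
  have hσint : σ.IsPadicInt := by
    intro i j
    rcases i with i | i <;> rcases j with j | j <;> fin_cases i <;> fin_cases j <;> simp [σ]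
  have hJmem := mem_GSpZ_of_isSimilitude isPadicInt_Jmat hJ norm_one
  have hσmem := mem_GSpZ_of_isSimilitude hσint hσ norm_one
  rcases i₀ with i | i <;> fin_cases i
  · have h1 : IsSimilitude (Jmat p) 1 1 := by simp [IsSimilitude]
    have h1int : (1 : Matrix Idx Idx ℚ_[p]).IsPadicInt := fun i j => by
      by_cases h : i = j <;> simp [one_apply, h]
    refine ⟨1, mem_GSpZ_of_isSimilitude h1int h1 norm_one, h1, ?_⟩
    ext j
    simp [one_apply, Pi.single_apply, eq_comm]
  · exact ⟨σ, hσmem, hσ, by ext j; rcases j with j | j <;> fin_cases j <;> simp [σ]⟩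
  · exact ⟨Jmat p, hJmem, hJ, by ext j; rcases j with j | j <;> fin_cases j <;> simp [Jmat]⟩
  · refine ⟨σ * Jmat p, mul_mem_GSpZ hσmem hJmem, by simpa using hσ.mul hJ, ?_⟩
    ext j
    rcases j with j | j <;> fin_cases j <;>
      simp [σ, Jmat, Matrix.mul_apply, Fintype.sum_sum_type]

theorem exists_mem_GSpZ_col_eq (v : Idx → ℚ_[p]) (hv : ∀ i, ‖v i‖ ≤ 1)
    (hv₀ : ‖v (Sum.inl 0)‖ = 1) :
    ∃ S ∈ GSpZ p, IsSimilitude (Jmat p) S 1 ∧ ∀ i, S i (Sum.inl 0) = v i := by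
  set a := v (Sum.inl 0)
  set b := v (Sum.inl 1)
  set c := v (Sum.inr 0)
  set d := v (Sum.inr 1)
  have ha : a ≠ 0 := norm_ne_zero_iff.mp (by simp [hv₀])
  -- the columns of `S` form a symplectic basis starting with `v`
  set S : Matrix Idx Idx ℚ_[p] :=
    fromBlocks !![a, 0; b, 1] 0 !![c, d * a⁻¹; d, 0] !![a⁻¹, -(b * a⁻¹); 0, 1]
  have hS : IsSimilitude (Jmat p) S 1 := by
    ext i j
    rcases i with i | i <;> rcases j with j | j <;> fin_cases i <;> fin_cases j <;>
      simp [S, Jmat, Matrix.mul_apply, Fintype.sum_sum_type] <;> field_simp <;> ring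
  have hSint : S.IsPadicInt := by
    intro i j
    rcases i with i | i <;> rcases j with j | j <;> fin_cases i <;> fin_cases j <;>
      simp [S, norm_mul, hv₀] <;> exact hv _
  refine ⟨S, mem_GSpZ_of_isSimilitude hSint hS norm_one, hS, ?_⟩
  intro i
  rcases i with i | i <;> fin_cases i <;> rfl


theorem exists_mem_GSpZ_mul_col_eq_single {M : Matrix Idx Idx ℚ_[p]} (hM : M.IsPadicInt)
    {i₀ j₀ : Idx} (h : ‖M i₀ j₀‖ = 1) : ∃ X ∈ GSpZ p, IsSimilitude (Jmat p) X 1 ∧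
      ∀ i, (X * M) i j₀ = (1 : Matrix Idx Idx ℚ_[p]) i (Sum.inl 0) := by
  obtain ⟨P, hP, hPsim, hProw⟩ := exists_mem_GSpZ_row_eq_single (p := p) i₀
  have hrow : (P * M) (Sum.inl 0) j₀ = M i₀ j₀ := by
    simp [Matrix.mul_apply, hProw, Pi.single_apply]
  obtain ⟨S, hS, hSsim, hScol⟩ := exists_mem_GSpZ_col_eq (fun i => (P * M) i j₀)
    (fun i => IsPadicInt.mul hP.2.1 hM i j₀) (by rw [hrow, h])
  have hSdet := isUnit_det_of_mem_GSpZ hS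
  refine ⟨S⁻¹ * P, mul_mem_GSpZ (inv_mem_GSpZ hS) hP,
    by simpa using (hSsim.inv one_ne_zero hSdet).mul hPsim, fun i => ?_⟩
  calc (S⁻¹ * P * M) i j₀ = (S⁻¹ * S) i (Sum.inl 0) := by
        simp only [Matrix.mul_assoc, Matrix.mul_apply (M := S⁻¹), hScol]
    _ = (1 : Matrix Idx Idx ℚ_[p]) i (Sum.inl 0) := by rw [nonsing_inv_mul _ hSdet]

theorem row_inr_zero_eq_of_col_eq_single {N : Matrix Idx Idx ℚ_[p]} {μ : ℚ_[p]}
    (hN : IsSimilitude (Jmat p) N μ) {j₀ : Idx}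
    (hcol : ∀ i, N i j₀ = (1 : Matrix Idx Idx ℚ_[p]) i (Sum.inl 0)) (k : Idx) :
    N (Sum.inr 0) k = μ * Jmat p j₀ k := by
  -- row `j₀` of `Nᵀ * Jmat p` is row `inl 0` of `Jmat p`, the unit vector at `inr 0`
  have h := congrFun (congrFun hN j₀) k
  simpa [Matrix.mul_apply, Fintype.sum_sum_type, hcol, Jmat, one_apply] using h

theorem exists_mem_GSpZ_eq_Bmat_mul {N : Matrix Idx Idx ℚ_[p]} {μ : ℚ_[p]}
    (hN : IsSimilitude (Jmat p) N μ) (hμ : μ.valuation = 2) {j₀ : Idx}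
    (hcol : ∀ i, N i j₀ = (1 : Matrix Idx Idx ℚ_[p]) i (Sum.inl 0))
    (hrank : N.HasReductionRank 1) :
    ∃ C ∈ GSpZ p, N = Bmat p * C := by
  have hp : (p : ℚ_[p]) ≠ 0 := by simp [(Fact.out : p.Prime).ne_zero]
  set d : Idx → ℚ_[p] := Sum.elim ![1, (p : ℚ_[p])] ![(p : ℚ_[p]) ^ 2, (p : ℚ_[p])]
  set C : Matrix Idx Idx ℚ_[p] := of fun i j => N i j / d i
  have hNC : N = Bmat p * C := by
    ext i j
    have hd : d i ≠ 0 := by rcases i with i | i <;> fin_cases i <;> simp [d, hp]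
    simp only [Bmat, C, diagonal_mul, of_apply]
    exact (mul_div_cancel₀ _ hd).symm
  have hlt : ∀ i ≠ Sum.inl 0, ∀ j, ‖N i j‖ < 1 := fun i hi =>
    hrank.norm_lt_one_of_rank_one (i₀ := Sum.inl 0) (j₀ := j₀) (by simp [hcol])
      (by simp [hcol, one_apply, hi])
  have hCint : C.IsPadicInt := by
    intro i j
    rcases i with i | i <;> fin_cases i
    · simpa [C, d] using hrank.isPadicInt _ j
    · simpa [C, d] using Padic.norm_div_p_le_one_of_norm_lt_one (hlt _ (by simp) j)
    · show ‖N (Sum.inr 0) j / (p : ℚ_[p]) ^ 2‖ ≤ 1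
      rw [row_inr_zero_eq_of_col_eq_single hN hcol, mul_div_right_comm, norm_mul,
        Padic.norm_div_p_sq_eq_one_of_valuation_eq_two hμ, one_mul]
      exact isPadicInt_Jmat _ _
    · simpa [C, d] using Padic.norm_div_p_le_one_of_norm_lt_one (hlt _ (by simp) j)
  have hCsim : IsSimilitude (Jmat p) C (μ / (p : ℚ_[p]) ^ 2) :=
    isSimilitude_Bmat.of_mul_left (hNC ▸ hN) (pow_ne_zero 2 hp)
  exact ⟨C, mem_GSpZ_of_isSimilitude hCint hCsim
    (Padic.norm_div_p_sq_eq_one_of_valuation_eq_two hμ), hNC⟩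

end GSp4

theorem mem_dcoset_B_iff_rank_one_general (p : ℕ) [Fact p.Prime]
    (M : Matrix Idx Idx ℚ_[p])
    (μ : ℚ_[p])
    (hμ : Mᵀ * Jmat p * M = μ • Jmat p)
    (hval : μ.valuation = 2) :
    (∃ X ∈ GSpZ p, ∃ Y ∈ GSpZ p, M = X * Bmat p * Y) ↔
      ∃ M' : Matrix Idx Idx ℤ_[p],
        (∀ i j, ((M' i j : ℚ_[p]) = M i j)) ∧
        (M'.map (PadicInt.toZMod : ℤ_[p] →+* ZMod p)).rank = 1 := by
  rw [← hasReductionRank_iff]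
  constructor
  · rintro ⟨X, hX, Y, hY, rfl⟩
    exact (hasReductionRank_Bmat.mul_left hX.2.1 hX.2.2).mul_right hY.2.1 hY.2.2
  · intro h
    obtain ⟨i₀, j₀, hunit⟩ := h.exists_norm_eq_one one_ne_zero
    obtain ⟨X, hX, hXsim, hcol⟩ := exists_mem_GSpZ_mul_col_eq_single h.isPadicInt hunit
    obtain ⟨C, hC, hXM⟩ := exists_mem_GSpZ_eq_Bmat_mul (by simpa using hXsim.mul hμ) hval
      hcol (h.mul_left hX.2.1 hX.2.2)
    refine ⟨X⁻¹, inv_mem_GSpZ hX, C, hC, ?_⟩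
    rw [Matrix.mul_assoc, ← hXM, ← Matrix.mul_assoc,
      nonsing_inv_mul _ (isUnit_det_of_mem_GSpZ hX), Matrix.one_mul]

theorem mem_dcoset_B_iff_rank_one (p : ℕ) [Fact p.Prime]
    (M : Matrix Idx Idx ℚ_[p])
    (hint : ∀ i j, ‖M i j‖ ≤ 1)
    (μ : ℚ_[p]) (hμ0 : μ ≠ 0)
    (hμ : Mᵀ * Jmat p * M = μ • Jmat p)
    (hval : μ.valuation = 2) :
    (∃ X ∈ GSpZ p, ∃ Y ∈ GSpZ p, M = X * Bmat p * Y) ↔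
      ∃ M' : Matrix Idx Idx ℤ_[p],
        (∀ i j, ((M' i j : ℚ_[p]) = M i j)) ∧
        (M'.map (PadicInt.toZMod : ℤ_[p] →+* ZMod p)).rank = 1 :=
  mem_dcoset_B_iff_rank_one_general p M μ hμ hval
end

section
/- Let n ≥ 1, p prime. In GSp_{2n}, let Δ̃ = { (A,a) : A ∈ GSp_{2n}(ℚ_p) ∩ M_{2n}(ℤ_p), a ∈ ℤ_p^{2n} } with product (A,a)(B,b) = (AB, A b + μ(B) a), and Δ̃_{p^m} = { (A,a) ∈ Δ̃ : v_p(μ(A)) = m }. Fix 0 < k < l, c₂ ∈ ℤ_p^n \ pℤ_p^n, C = diag(p^k I_n, p^l I_n), c = (0, c₂) ∈ ℤ_p^{2n}. Then (C,c) ∈ Δ̃_{p^k} · Δ̃_{p^l} but (C,c) ∉ Δ̃_{p^l} · Δ̃_{p^k}. -/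
open Matrix

section Aux
variable {p : ℕ} [hp : Fact p.Prime] {m : Type*} [Fintype m] [DecidableEq m]

set_option linter.unusedSectionVars false

private lemma pk_val (k : ℕ) : ((p : ℚ_[p]) ^ k).valuation = (k : ℤ) := by
  induction k with
  | zero => simp [Padic.valuation_one]
  | succ k ih =>
    have hp0 : (p : ℚ_[p]) ≠ 0 := by
      exact_mod_cast Nat.cast_ne_zero.mpr hp.out.ne_zero
    rw [pow_succ, Padic.valuation_mul (pow_ne_zero _ hp0) hp0, ih, Padic.valuation_p]
    push_cast; ring

private lemma Dg_conj (α δ : ℚ_[p]) :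
    (fromBlocks (α • 1) 0 0 (δ • 1) : Matrix (m ⊕ m) (m ⊕ m) ℚ_[p])ᵀ *
      (fromBlocks 0 1 (-1) 0) * fromBlocks (α • 1) 0 0 (δ • 1)
      = (α * δ) • fromBlocks 0 1 (-1) 0 := by
  simp [fromBlocks_transpose, fromBlocks_multiply, fromBlocks_smul, Matrix.smul_mul,
    Matrix.mul_smul, smul_smul, mul_comm]

private lemma Dg_mul (α δ α' δ' : ℚ_[p]) :
    (fromBlocks (α • 1) 0 0 (δ • 1) : Matrix (m ⊕ m) (m ⊕ m) ℚ_[p]) *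
      fromBlocks (α' • 1) 0 0 (δ' • 1) = fromBlocks ((α * α') • 1) 0 0 ((δ * δ') • 1) := by
  simp [fromBlocks_multiply, Matrix.smul_mul, Matrix.mul_smul, smul_smul, mul_comm]

private lemma Dg_mulVec (α δ : ℚ_[p]) (u v : m → ℚ_[p]) :
    (fromBlocks (α • 1) 0 0 (δ • 1) : Matrix (m ⊕ m) (m ⊕ m) ℚ_[p]).mulVec (Sum.elim u v)
      = Sum.elim (α • u) (δ • v) := by
  simp [fromBlocks_mulVec, smul_mulVec]

private lemma Dg_entries {α δ : ℚ_[p]} (hα : ‖α‖ ≤ 1) (hδ : ‖δ‖ ≤ 1) (i j : m ⊕ m) :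
    ‖(fromBlocks (α • 1) 0 0 (δ • 1) : Matrix (m ⊕ m) (m ⊕ m) ℚ_[p]) i j‖ ≤ 1 := by
  rcases i with i | i <;> rcases j with j | j <;>
    simp [fromBlocks, Matrix.smul_apply, one_apply] <;> split_ifs <;>
    simp [hα, hδ]

private lemma mul_entry_le_one {A B : Matrix (m ⊕ m) (m ⊕ m) ℚ_[p]}
    (hA : ∀ i j, ‖A i j‖ ≤ 1) (hB : ∀ i j, ‖B i j‖ ≤ 1) (i j : m ⊕ m) :
    ‖(A * B) i j‖ ≤ 1 := by
  rw [Matrix.mul_apply]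
  refine IsUltrametricDist.norm_sum_le_of_forall_le_of_nonneg zero_le_one fun s _ => ?_
  rw [norm_mul]
  exact mul_le_one₀ (hA i s) (norm_nonneg _) (hB s j)

private lemma J_entries (i j : m ⊕ m) :
    ‖(fromBlocks 0 1 (-1) 0 : Matrix (m ⊕ m) (m ⊕ m) ℚ_[p]) i j‖ ≤ 1 := by
  rcases i with i | i <;> rcases j with j | j <;>
    simp [fromBlocks, one_apply] <;> split_ifs <;> simp

private lemma JJ : (fromBlocks 0 1 (-1) 0 : Matrix (m ⊕ m) (m ⊕ m) ℚ_[p]) *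
    fromBlocks 0 1 (-1) 0 = -1 := by
  simp [fromBlocks_multiply, ← fromBlocks_one, fromBlocks_neg]

end Aux

theorem twisted_product_noncommutative_element
    (p : ℕ) [Fact p.Prime] (n : ℕ)
    (k l : ℕ) (hk : 0 < k) (hkl : k < l)
    (c₂ : Fin (n + 1) → ℚ_[p]) (hc₂int : ∀ i, ‖c₂ i‖ ≤ 1) (hc₂unit : ∃ i, ‖c₂ i‖ = 1) :
    let ι := Fin (n + 1) ⊕ Fin (n + 1)
    let J : Matrix ι ι ℚ_[p] := Matrix.fromBlocks 0 1 (-1) 0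
    -- `Δ̃_{p^m}`: integral pairs with `v_p(μ(A)) = m`
    let Dm : ℕ → Set (Matrix ι ι ℚ_[p] × (ι → ℚ_[p])) := fun m =>
      {x | (∀ i j, ‖x.1 i j‖ ≤ 1) ∧ (∀ i, ‖x.2 i‖ ≤ 1) ∧
        ∃ μ : ℚ_[p], μ ≠ 0 ∧ x.1ᵀ * J * x.1 = μ • J ∧ μ.valuation = (m : ℤ)}
    -- the product set `Δ̃_{p^m}·Δ̃_{p^m'}` under `(A,a)(B,b) = (AB, Ab + μ(B)a)`
    let prodSet : ℕ → ℕ → Set (Matrix ι ι ℚ_[p] × (ι → ℚ_[p])) := fun m m' =>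
      {z | ∃ x ∈ Dm m, ∃ y ∈ Dm m', ∃ μy : ℚ_[p],
        y.1ᵀ * J * y.1 = μy • J ∧ z = (x.1 * y.1, x.1.mulVec y.2 + μy • x.2)}
    let C : Matrix ι ι ℚ_[p] :=
      Matrix.fromBlocks ((p : ℚ_[p]) ^ k • 1) 0 0 ((p : ℚ_[p]) ^ l • 1)
    let c : ι → ℚ_[p] := Sum.elim 0 c₂
    (C, c) ∈ prodSet k l ∧ (C, c) ∉ prodSet l k := by
  intro ι J Dm prodSet C c
  have hp' : Fact p.Prime := ‹_›
  have hp0 : (p : ℚ_[p]) ≠ 0 := by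
    exact_mod_cast Nat.cast_ne_zero.mpr hp'.out.ne_zero
  have hP1 : (1 : ℝ) < (p : ℝ) := by exact_mod_cast hp'.out.one_lt
  have hpnorm : ∀ j : ℕ, ‖(p : ℚ_[p]) ^ j‖ ≤ 1 := by
    intro j
    rw [norm_pow, Padic.norm_p]
    exact pow_le_one₀ (by positivity) (inv_le_one_of_one_le₀ hP1.le)
  constructor
  · -- membership in prodSet k l
    refine ⟨(fromBlocks ((p : ℚ_[p]) ^ k • 1) 0 0 ((1 : ℚ_[p]) • 1), 0), ?_,
      (fromBlocks ((1 : ℚ_[p]) • 1) 0 0 ((p : ℚ_[p]) ^ l • 1), Sum.elim 0 c₂), ?_,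
      (p : ℚ_[p]) ^ l, ?_, ?_⟩
    · exact ⟨Dg_entries (hpnorm k) (by simp), by simp,
        ⟨(p : ℚ_[p]) ^ k, pow_ne_zero _ hp0, by
          have h := Dg_conj (m := Fin (n + 1)) ((p : ℚ_[p]) ^ k) 1
          rw [mul_one] at h; exact h, pk_val k⟩⟩
    · exact ⟨Dg_entries (by simp) (hpnorm l), by
        intro i; rcases i with i | i <;> simp [hc₂int],
        ⟨(p : ℚ_[p]) ^ l, pow_ne_zero _ hp0, by
          have h := Dg_conj (m := Fin (n + 1)) 1 ((p : ℚ_[p]) ^ l)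
          rw [one_mul] at h; exact h, pk_val l⟩⟩
    · have h := Dg_conj (m := Fin (n + 1)) 1 ((p : ℚ_[p]) ^ l)
      rw [one_mul] at h; exact h
    · refine Prod.ext ?_ ?_
      · show C = _
        have h := Dg_mul (m := Fin (n + 1)) ((p : ℚ_[p]) ^ k) 1 1 ((p : ℚ_[p]) ^ l)
        rw [mul_one, one_mul] at h
        exact h.symm
      · show c = fromBlocks ((p : ℚ_[p]) ^ k • 1) 0 0 ((1 : ℚ_[p]) • 1) *ᵥ
            (Sum.elim 0 c₂) + ((p : ℚ_[p]) ^ l) • (0 : ι → ℚ_[p])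
        rw [Dg_mulVec, smul_zero, smul_zero, one_smul, add_zero]
  · -- non-membership in prodSet l k
    rintro ⟨x, hx, y, hy, μy, hyJ, heq⟩
    obtain ⟨hxint, hxv, -⟩ := hx
    obtain ⟨hyint, hyv, μ, hμ0, hμJ, hμval⟩ := hy
    have hμμy : μ = μy := by
      have h2 : μ • J = μy • J := hμJ.symm.trans hyJ
      have h3 := congrFun (congrFun h2 (Sum.inl (0 : Fin (n + 1)))) (Sum.inr (0 : Fin (n + 1)))
      simpa [J, Matrix.smul_apply] using h3
    subst hμμy
    have hC : C = x.1 * y.1 := congrArg Prod.fst heq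
    have hc2 : c = x.1.mulVec y.2 + μ • x.2 := congrArg Prod.snd heq
    set M : Matrix ι ι ℚ_[p] := -(J * y.1ᵀ * J) with hMdef
    have hMy : M * y.1 = μ • 1 := by
      have h1 : J * y.1ᵀ * J * y.1 = μ • (J * J) := by
        rw [mul_assoc J, mul_assoc J, hyJ, Matrix.mul_smul]
      rw [hMdef, neg_mul, h1]
      show -(μ • ((fromBlocks 0 1 (-1) 0 : Matrix ι ι ℚ_[p]) * fromBlocks 0 1 (-1) 0)) = _
      rw [JJ]
      simp
    have hyM : y.1 * M = μ • 1 := by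
      have h2 : (μ⁻¹ • M) * y.1 = 1 := by
        rw [Matrix.smul_mul, hMy, smul_smul, inv_mul_cancel₀ hμ0, one_smul]
      have h3 := mul_eq_one_comm.mp h2
      calc y.1 * M = μ • (y.1 * (μ⁻¹ • M)) := by
            rw [Matrix.mul_smul, smul_smul, mul_inv_cancel₀ hμ0, one_smul]
        _ = μ • 1 := by rw [h3]
    have hCM : C * M = μ • x.1 := by
      rw [hC, mul_assoc, hyM, Matrix.mul_smul, mul_one]
    have hMint : ∀ i j, ‖M i j‖ ≤ 1 := by
      intro i j
      rw [hMdef, Matrix.neg_apply, norm_neg]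
      exact mul_entry_le_one
        (mul_entry_le_one J_entries (fun i j => by rw [Matrix.transpose_apply]; exact hyint j i))
        J_entries i j
    obtain ⟨i₀, hi₀⟩ := hc₂unit
    have he : c₂ i₀ = (x.1.mulVec y.2) (Sum.inr i₀) + μ * x.2 (Sum.inr i₀) := by
      have h4 := congrFun hc2 (Sum.inr i₀)
      simpa [c] using h4
    have hCMt : ∀ t, (C * M) (Sum.inr i₀) t = (p : ℚ_[p]) ^ l * M (Sum.inr i₀) t := by
      intro t
      rw [Matrix.mul_apply, Fintype.sum_sum_type]
      simp [C, Matrix.smul_apply, one_apply, ite_mul]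
    have hkey : μ * c₂ i₀ =
        (∑ t, (C * M) (Sum.inr i₀) t * y.2 t) + μ * (μ * x.2 (Sum.inr i₀)) := by
      rw [he, mul_add]
      congr 1
      have h5 : μ * (x.1.mulVec y.2) (Sum.inr i₀) = ((μ • x.1).mulVec y.2) (Sum.inr i₀) := by
        simp [Matrix.mulVec, dotProduct, Finset.mul_sum, Matrix.smul_apply, mul_assoc]
      rw [h5, ← hCM]
      simp [Matrix.mulVec, dotProduct]
    have hμnorm : ‖μ‖ = (p : ℝ) ^ (-(k : ℤ)) := by
      rw [Padic.norm_eq_zpow_neg_valuation hμ0, hμval]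
    have hb1 : ‖∑ t, (C * M) (Sum.inr i₀) t * y.2 t‖ ≤ (p : ℝ) ^ (-(l : ℤ)) := by
      refine IsUltrametricDist.norm_sum_le_of_forall_le_of_nonneg (by positivity) fun t _ => ?_
      rw [hCMt t, norm_mul, norm_mul, norm_pow, Padic.norm_p]
      have h6 : ((p : ℝ)⁻¹) ^ l = (p : ℝ) ^ (-(l : ℤ)) := by
        rw [inv_pow, ← zpow_natCast (p : ℝ) l]
        exact (_root_.zpow_neg _ _).symm
      rw [mul_assoc, h6]
      calc (p : ℝ) ^ (-(l : ℤ)) * (‖M (Sum.inr i₀) t‖ * ‖y.2 t‖)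
          ≤ (p : ℝ) ^ (-(l : ℤ)) * 1 := by
            refine mul_le_mul_of_nonneg_left ?_ (by positivity)
            exact mul_le_one₀ (hMint _ _) (norm_nonneg _) (hyv t)
        _ = (p : ℝ) ^ (-(l : ℤ)) := mul_one _
    have hb2 : ‖μ * (μ * x.2 (Sum.inr i₀))‖ ≤ (p : ℝ) ^ (-(2 * k : ℤ)) := by
      rw [norm_mul, norm_mul, hμnorm]
      have h7 : (p : ℝ) ^ (-(k : ℤ)) * ((p : ℝ) ^ (-(k : ℤ)) * ‖x.2 (Sum.inr i₀)‖)
          ≤ (p : ℝ) ^ (-(k : ℤ)) * ((p : ℝ) ^ (-(k : ℤ)) * 1) :=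
        mul_le_mul_of_nonneg_left
          (mul_le_mul_of_nonneg_left (hxv _) (by positivity)) (by positivity)
      calc (p : ℝ) ^ (-(k : ℤ)) * ((p : ℝ) ^ (-(k : ℤ)) * ‖x.2 (Sum.inr i₀)‖)
          ≤ (p : ℝ) ^ (-(k : ℤ)) * ((p : ℝ) ^ (-(k : ℤ)) * 1) := h7
        _ = (p : ℝ) ^ (-(2 * k : ℤ)) := by
            rw [mul_one, ← zpow_add₀ (by positivity : (p : ℝ) ≠ 0)]
            ring_nf
    have hfin : (p : ℝ) ^ (-(k : ℤ)) ≤ (p : ℝ) ^ (-(k : ℤ) - 1) := by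
      have h8 : ‖μ * c₂ i₀‖ = (p : ℝ) ^ (-(k : ℤ)) := by
        rw [norm_mul, hμnorm, hi₀, mul_one]
      have h9 := Padic.nonarchimedean
        (∑ t, (C * M) (Sum.inr i₀) t * y.2 t) (μ * (μ * x.2 (Sum.inr i₀)))
      rw [← hkey, h8] at h9
      have hl : (p : ℝ) ^ (-(l : ℤ)) ≤ (p : ℝ) ^ (-(k : ℤ) - 1) :=
        zpow_le_zpow_right₀ hP1.le (by omega)
      have h2k : (p : ℝ) ^ (-(2 * k : ℤ)) ≤ (p : ℝ) ^ (-(k : ℤ) - 1) :=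
        zpow_le_zpow_right₀ hP1.le (by omega)
      exact h9.trans (max_le (hb1.trans hl) (hb2.trans h2k))
    have hlt := zpow_lt_zpow_right₀ hP1 (show (-(k : ℤ) - 1) < -(k : ℤ) by omega)
    linarith
end
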